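/- arXiv:1302.5687 — 4 statements merged into one kernel-verified Lean document; each statement's English description precedes it below -/
import Mathlib

section
/- Let A = [[3, 2√2, 0], [2√2, 3, 0], [0, 0, 1]] and for t ∈ ℝ let B_t = [[√(1+t²), 0, t], [0, 1, 0], [t, 0, √(1+t²)]], both elements of O(2,1) with respect to η = diag(−1,1,1). Let r_t = diag(1, 1, t⁻¹) for t ≠ 0. Then the rescaled commutator r_t·(A·B_t·A⁻¹·B_t⁻¹)·r_t⁻¹ converges, as t → 0 through nonzero values, to the matrix [[1,0,0],[0,1,0],[2,−2√2,1]]. -/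
open Matrix Filter Topology

/-!
`A` and `B_t` are hyperbolic boosts in the `(x₀, x₁)`- and `(x₀, x₂)`-planes. In their commutator
the first two entries of the last row are divisible by `t`, and so are the first two entries of the
last column, so conjugation by `r_t` divides the former by `t` and multiplies the latter by `t`.
The result is a polynomial matrix in `t` and `√(1 + t²)`, continuous at `t = 0`, whose value there
is the limit.
-/

section CommRing

variable {R : Type*} [CommRing R]

def boost01 (a b : R) : Matrix (Fin 3) (Fin 3) R := !![a, b, 0; b, a, 0; 0, 0, 1]

def boost02 (c s : R) : Matrix (Fin 3) (Fin 3) R := !![c, 0, s; 0, 1, 0; s, 0, c]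

/-- For `s ≠ 0`, the commutator `boost01 a b * boost02 c s * boost01 a (-b) * boost02 c (-s)`
conjugated by `diagonal ![1, 1, s⁻¹]`. -/
def rescaledCommutator (a b c s : R) : Matrix (Fin 3) (Fin 3) R :=
  !![a ^ 2 * c ^ 2 - b ^ 2 * c - a * s ^ 2, a * b * (1 - c), s ^ 2 * (b ^ 2 + a * c - a ^ 2 * c);
     a * b * c * (c - 1) - b * s ^ 2, a ^ 2 - b ^ 2 * c, s ^ 2 * b * (a + c - a * c);
     c * (a - 1), -b, c ^ 2 - a * s ^ 2]

theorem boost01_inv {a b : R} (h : a * a - b * b = 1) : (boost01 a b)⁻¹ = boost01 a (-b) := by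
  refine inv_eq_right_inv ?_
  ext i j
  fin_cases i <;> fin_cases j <;>
    simp [boost01, mul_apply, Fin.sum_univ_three, mul_comm] <;> linear_combination h

theorem boost02_inv {c s : R} (h : c * c - s * s = 1) : (boost02 c s)⁻¹ = boost02 c (-s) := by
  refine inv_eq_right_inv ?_
  ext i j
  fin_cases i <;> fin_cases j <;>
    simp [boost02, mul_apply, Fin.sum_univ_three, mul_comm] <;> linear_combination h

theorem commutator_mul_diagonal (a b c s : R) :
    boost01 a b * boost02 c s * boost01 a (-b) * boost02 c (-s) * diagonal ![1, 1, s] =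
      diagonal ![1, 1, s] * rescaledCommutator a b c s := by
  ext i j
  fin_cases i <;> fin_cases j <;>
    simp [boost01, boost02, rescaledCommutator, mul_apply, Fin.sum_univ_three] <;> ring

theorem rescaledCommutator_one_zero (a b : R) :
    rescaledCommutator a b 1 0 = !![a ^ 2 - b ^ 2, 0, 0; 0, a ^ 2 - b ^ 2, 0; a - 1, -b, 1] := by
  ext i j
  fin_cases i <;> fin_cases j <;> simp [rescaledCommutator]

end CommRing

theorem diagonal_mul_commutator_mul_inv_diagonal {K : Type*} [Field K] {a b c s : K}
    (hab : a * a - b * b = 1) (hcs : c * c - s * s = 1) (hs : s ≠ 0) :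
    diagonal ![1, 1, s⁻¹] * (boost01 a b * boost02 c s * (boost01 a b)⁻¹ * (boost02 c s)⁻¹) *
      (diagonal ![1, 1, s⁻¹])⁻¹ = rescaledCommutator a b c s := by
  have hone : diagonal ![1, 1, s⁻¹] * diagonal ![1, 1, s] = 1 := by
    rw [diagonal_mul_diagonal]
    ext i j
    fin_cases i <;> fin_cases j <;> simp [hs]
  rw [inv_eq_right_inv hone, boost01_inv hab, boost02_inv hcs, Matrix.mul_assoc,
    commutator_mul_diagonal, ← Matrix.mul_assoc, hone, Matrix.one_mul]

theorem Continuous.rescaledCommutator {X R : Type*} [TopologicalSpace X] [CommRing R]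
    [TopologicalSpace R] [IsTopologicalRing R] (a b : R) {f g : X → R} (hf : Continuous f)
    (hg : Continuous g) : Continuous fun x => rescaledCommutator a b (f x) (g x) := by
  refine continuous_matrix fun i j => ?_
  fin_cases i <;> fin_cases j <;> simp [_root_.rescaledCommutator] <;> fun_prop

theorem tendsto_rescaledCommutator_sqrt (a b : ℝ) :
    Tendsto (fun t => rescaledCommutator a b √(1 + t ^ 2) t) (𝓝 0)
      (𝓝 (rescaledCommutator a b 1 0)) := by
  have hcont : Continuous fun t : ℝ => rescaledCommutator a b √(1 + t ^ 2) t :=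
    .rescaledCommutator a b (by fun_prop) continuous_id
  convert hcont.tendsto 0 using 2
  norm_num

/-- The rescaled commutator of the cone-torus holonomies
`A = [[3,2√2,0],[2√2,3,0],[0,0,1]]` and
`B_t = [[√(1+t²),0,t],[0,1,0],[t,0,√(1+t²)]]` converges, as `t → 0` through
nonzero values, to the half-pipe isometry `[[1,0,0],[0,1,0],[2,-2√2,1]]`. -/
theorem stmt_5
    (A : Matrix (Fin 3) (Fin 3) ℝ)
    (hA : A = !![3, 2 * Real.sqrt 2, 0; 2 * Real.sqrt 2, 3, 0; 0, 0, 1])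
    (B : ℝ → Matrix (Fin 3) (Fin 3) ℝ)
    (hB : ∀ t : ℝ, B t = !![Real.sqrt (1 + t ^ 2), 0, t; 0, 1, 0;
      t, 0, Real.sqrt (1 + t ^ 2)])
    (r : ℝ → Matrix (Fin 3) (Fin 3) ℝ)
    (hr : ∀ t : ℝ, r t = !![1, 0, 0; 0, 1, 0; 0, 0, t⁻¹]) :
    Tendsto (fun t : ℝ => r t * (A * B t * A⁻¹ * (B t)⁻¹) * (r t)⁻¹)
      (𝓝[≠] (0 : ℝ)) (𝓝 !![1, 0, 0; 0, 1, 0; 2, -(2 * Real.sqrt 2), 1]) := by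
  have hsqrt2 : (2 * √2) ^ 2 = (8 : ℝ) := by rw [mul_pow, Real.sq_sqrt zero_le_two]; norm_num
  have hA_boost : (3 : ℝ) * 3 - 2 * √2 * (2 * √2) = 1 := by
    linear_combination -hsqrt2
  have hB_boost (t : ℝ) : √(1 + t ^ 2) * √(1 + t ^ 2) - t * t = 1 := by
    rw [Real.mul_self_sqrt (by positivity)]; ring
  have hr_diagonal (t : ℝ) : r t = diagonal ![1, 1, t⁻¹] := by
    ext i j
    fin_cases i <;> fin_cases j <;> simp [hr]
  have hlimit : !![1, 0, 0; 0, 1, 0; 2, -(2 * √2), 1] = rescaledCommutator 3 (2 * √2) 1 0 := by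
    rw [rescaledCommutator_one_zero, hsqrt2]; norm_num
  rw [hlimit]
  refine ((tendsto_rescaledCommutator_sqrt _ _).mono_left nhdsWithin_le_nhds).congr' ?_
  filter_upwards [self_mem_nhdsWithin] with t ht
  rw [hr_diagonal, hA, hB]
  exact (diagonal_mul_commutator_mul_inv_diagonal hA_boost (hB_boost t) ht).symm
end

section
/- Let A = [[3, 2√2, 0], [2√2, 3, 0], [0, 0, 1]] and for t ∈ ℝ let B_t = [[√(1+t²), 0, t], [0, 1, 0], [t, 0, √(1+t²)]]. Then the trace of the commutator satisfies lim_{t → 0} ( trace(A·B_t·A⁻¹·B_t⁻¹) − 3 ) / t² = −4; equivalently, trace(A·B_t·A⁻¹·B_t⁻¹) = 3 − 4t² + o(t²). (Since an elliptic element of SO(2,1) rotating by angle θ has trace 1 + 2cos θ, this expresses that the commutator is elliptic with rotation angle θ(t) = 2π − 2t + O(t²).) -/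
open Matrix Filter Topology

lemma trace_comm_eval (t : ℝ) :
    Matrix.trace (!![(3:ℝ), 2 * Real.sqrt 2, 0; 2 * Real.sqrt 2, 3, 0; 0, 0, 1]
      * !![Real.sqrt (1 + t ^ 2), 0, t; 0, 1, 0; t, 0, Real.sqrt (1 + t ^ 2)]
      * (!![(3:ℝ), 2 * Real.sqrt 2, 0; 2 * Real.sqrt 2, 3, 0; 0, 0, 1])⁻¹
      * (!![Real.sqrt (1 + t ^ 2), 0, t; 0, 1, 0; t, 0, Real.sqrt (1 + t ^ 2)])⁻¹)
    = 19 + 4 * t ^ 2 - 16 * Real.sqrt (1 + t ^ 2) := by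
  have h2 : Real.sqrt 2 * Real.sqrt 2 = 2 := Real.mul_self_sqrt (by norm_num)
  have hpos : (0:ℝ) ≤ 1 + t ^ 2 := by positivity
  have hs : Real.sqrt (1 + t ^ 2) * Real.sqrt (1 + t ^ 2) = 1 + t ^ 2 :=
    Real.mul_self_sqrt hpos
  have hAinv : (!![(3:ℝ), 2 * Real.sqrt 2, 0; 2 * Real.sqrt 2, 3, 0; 0, 0, 1])⁻¹
      = !![(3:ℝ), -(2 * Real.sqrt 2), 0; -(2 * Real.sqrt 2), 3, 0; 0, 0, 1] := by
    apply Matrix.inv_eq_right_inv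
    ext i j
    fin_cases i <;> fin_cases j <;>
      simp [Matrix.mul_apply, Fin.sum_univ_three, Matrix.one_apply] <;> nlinarith [h2]
  have hBinv : (!![Real.sqrt (1 + t ^ 2), 0, t; 0, 1, 0; t, 0, Real.sqrt (1 + t ^ 2)])⁻¹
      = !![Real.sqrt (1 + t ^ 2), 0, -t; 0, 1, 0; -t, 0, Real.sqrt (1 + t ^ 2)] := by
    apply Matrix.inv_eq_right_inv
    ext i j
    fin_cases i <;> fin_cases j <;>
      simp [Matrix.mul_apply, Fin.sum_univ_three, Matrix.one_apply] <;> nlinarith [hs]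
  rw [hAinv, hBinv]
  simp [Matrix.trace_fin_three, Matrix.mul_apply, Fin.sum_univ_three]
  linear_combination (10:ℝ) * hs - 8 * Real.sqrt (1 + t ^ 2) * h2

/-- The trace of the commutator of the cone-torus holonomies satisfies
`trace(A·B_t·A⁻¹·B_t⁻¹) = 3 - 4t² + o(t²)`, i.e.
`(trace(A·B_t·A⁻¹·B_t⁻¹) - 3)/t² → -4` as `t → 0`: the commutator is
elliptic with rotation angle `θ(t) = 2π - 2t + O(t²)`. -/
theorem stmt_6
    (A : Matrix (Fin 3) (Fin 3) ℝ)
    (hA : A = !![3, 2 * Real.sqrt 2, 0; 2 * Real.sqrt 2, 3, 0; 0, 0, 1])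
    (B : ℝ → Matrix (Fin 3) (Fin 3) ℝ)
    (hB : ∀ t : ℝ, B t = !![Real.sqrt (1 + t ^ 2), 0, t; 0, 1, 0;
      t, 0, Real.sqrt (1 + t ^ 2)]) :
    Tendsto (fun t : ℝ =>
        (Matrix.trace (A * B t * A⁻¹ * (B t)⁻¹) - 3) / t ^ 2)
      (𝓝[≠] (0 : ℝ)) (𝓝 (-4 : ℝ)) := by
  have key : ∀ t : ℝ, t ≠ 0 →
      (Matrix.trace (A * B t * A⁻¹ * (B t)⁻¹) - 3) / t ^ 2
        = 4 - 16 / (Real.sqrt (1 + t ^ 2) + 1) := by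
    intro t ht
    rw [hA, hB t, trace_comm_eval t]
    have hpos : (0:ℝ) ≤ 1 + t ^ 2 := by positivity
    have hs : Real.sqrt (1 + t ^ 2) * Real.sqrt (1 + t ^ 2) = 1 + t ^ 2 :=
      Real.mul_self_sqrt hpos
    have hsp : Real.sqrt (1 + t ^ 2) + 1 > 0 := by positivity
    have ht2 : t ^ 2 ≠ 0 := pow_ne_zero 2 ht
    field_simp
    nlinarith [hs]
  have hcont : Tendsto (fun t : ℝ => 4 - 16 / (Real.sqrt (1 + t ^ 2) + 1))
      (𝓝 (0 : ℝ)) (𝓝 (-4 : ℝ)) := by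
    have : Continuous fun t : ℝ => 4 - 16 / (Real.sqrt (1 + t ^ 2) + 1) := by
      apply Continuous.sub continuous_const
      apply Continuous.div continuous_const
      · exact ((Real.continuous_sqrt.comp (by continuity)).add continuous_const)
      · intro t; positivity
    have h0 : (4 : ℝ) - 16 / (Real.sqrt (1 + (0:ℝ) ^ 2) + 1) = -4 := by
      norm_num
    exact h0 ▸ this.continuousAt.tendsto
  refine (hcont.mono_left nhdsWithin_le_nhds).congr' ?_
  filter_upwards [self_mem_nhdsWithin] with t ht
  exact (key t ht).symm
end

section
/- Let A = [[a,b],[c,d]] ∈ M₂(ℝ) with det A = ±1. For B = [[e,f],[g,h]] ∈ M₂(ℝ) define v(A,B) = (−ce − df + ag + bh, −ce + df + ag − bh, −cf − de + ah + bg) ∈ ℝ³. Then the map B ↦ v(A,B), restricted to the 3-dimensional subspace {B ∈ M₂(ℝ) : trace(A⁻¹B) = 0}, is an ℝ-linear bijection onto ℝ³. -/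
open Matrix

def vMap (A B : Matrix (Fin 2) (Fin 2) ℝ) : Fin 3 → ℝ :=
  ![-(A 1 0 * B 0 0) - A 1 1 * B 0 1 + A 0 0 * B 1 0 + A 0 1 * B 1 1,
    -(A 1 0 * B 0 0) + A 1 1 * B 0 1 + A 0 0 * B 1 0 - A 0 1 * B 1 1,
    -(A 1 0 * B 0 1) - A 1 1 * B 0 0 + A 0 0 * B 1 1 + A 0 1 * B 1 0]

lemma solve_aux (a b c d e f g h : ℝ) (hΔ : (a*d - b*c)*(a*d - b*c) = 1)
    (E1 : -(c*e) - d*f + a*g + b*h = 0)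
    (E2 : -(c*e) + d*f + a*g - b*h = 0)
    (E3 : -(c*f) - d*e + a*h + b*g = 0)
    (E4 : d*e - b*g - c*f + a*h = 0) :
    e = 0 ∧ f = 0 ∧ g = 0 ∧ h = 0 := by
  refine ⟨?_, ?_, ?_, ?_⟩
  · linear_combination ((a*d-b*c)*b/2)*E1 + ((a*d-b*c)*b/2)*E2
      - ((a*d-b*c)*a/2)*E3 + ((a*d-b*c)*a/2)*E4 - e*hΔ
  · linear_combination (-(a*d-b*c)*a/2)*E1 + ((a*d-b*c)*a/2)*E2
      + ((a*d-b*c)*b/2)*E3 + ((a*d-b*c)*b/2)*E4 - f*hΔ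
  · linear_combination ((a*d-b*c)*d/2)*E1 + ((a*d-b*c)*d/2)*E2
      - ((a*d-b*c)*c/2)*E3 + ((a*d-b*c)*c/2)*E4 - g*hΔ
  · linear_combination (-(a*d-b*c)*c/2)*E1 + ((a*d-b*c)*c/2)*E2
      + ((a*d-b*c)*d/2)*E3 + ((a*d-b*c)*d/2)*E4 - h*hΔ

/-- If `det A = ±1`, then `B ↦ v(A,B)` is `ℝ`-linear and restricts to a
bijection from the subspace `{B : trace(A⁻¹B) = 0}` onto `ℝ³`. -/
theorem stmt_14 (A : Matrix (Fin 2) (Fin 2) ℝ) (hA : A.det = 1 ∨ A.det = -1) :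
    (∀ (r : ℝ) (B₁ B₂ : Matrix (Fin 2) (Fin 2) ℝ),
      vMap A (r • B₁ + B₂) = r • vMap A B₁ + vMap A B₂) ∧
    Set.BijOn (vMap A)
      {B : Matrix (Fin 2) (Fin 2) ℝ | Matrix.trace (A⁻¹ * B) = 0}
      Set.univ := by
  have hd : A.det ≠ 0 := by rcases hA with h | h <;> rw [h] <;> norm_num
  have hdsq : A.det * A.det = 1 := by rcases hA with h | h <;> rw [h] <;> norm_num
  have hdet : A.det = A 0 0 * A 1 1 - A 0 1 * A 1 0 := Matrix.det_fin_two A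
  have hdsq' : (A 0 0 * A 1 1 - A 0 1 * A 1 0) * (A 0 0 * A 1 1 - A 0 1 * A 1 0) = 1 := by
    rw [← hdet]; exact hdsq
  have key : ∀ B : Matrix (Fin 2) (Fin 2) ℝ, Matrix.trace (A⁻¹ * B) =
      (A.det)⁻¹ * (A 1 1 * B 0 0 - A 0 1 * B 1 0 - A 1 0 * B 0 1 + A 0 0 * B 1 1) := by
    intro B
    rw [Matrix.inv_def, Matrix.adjugate_fin_two, Ring.inverse_eq_inv']
    simp [Matrix.trace_fin_two, Matrix.mul_apply, Matrix.vecMul, dotProduct, Fin.sum_univ_two]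
    ring
  have mem_iff : ∀ B : Matrix (Fin 2) (Fin 2) ℝ,
      B ∈ {B : Matrix (Fin 2) (Fin 2) ℝ | Matrix.trace (A⁻¹ * B) = 0} ↔
      A 1 1 * B 0 0 - A 0 1 * B 1 0 - A 1 0 * B 0 1 + A 0 0 * B 1 1 = 0 := by
    intro B
    simp only [Set.mem_setOf_eq, key B, mul_eq_zero, inv_eq_zero]
    constructor
    · rintro (h | h); · exact absurd h hd
      · exact h
    · intro h; exact Or.inr h
  constructor
  · intro r B₁ B₂
    funext i
    fin_cases i <;>
      simp [vMap, Matrix.add_apply, Matrix.smul_apply, smul_eq_mul] <;> ring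
  · refine ⟨fun B _ => Set.mem_univ _, ?_, ?_⟩
    · intro B₁ h1 B₂ h2 hEq
      rw [mem_iff] at h1 h2
      have hv0 := congrFun hEq 0
      have hv1 := congrFun hEq 1
      have hv2 := congrFun hEq 2
      simp only [vMap, Matrix.cons_val_zero, Matrix.cons_val_one, Matrix.head_cons,
        Matrix.cons_val_two, Matrix.tail_cons] at hv0 hv1 hv2
      have := solve_aux (A 0 0) (A 0 1) (A 1 0) (A 1 1)
        (B₁ 0 0 - B₂ 0 0) (B₁ 0 1 - B₂ 0 1) (B₁ 1 0 - B₂ 1 0) (B₁ 1 1 - B₂ 1 1)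
        hdsq' (by linarith [hv0]) (by linarith [hv1]) (by linarith [hv2]) (by linarith)
      obtain ⟨he, hf, hg, hh⟩ := this
      ext i j
      fin_cases i <;> fin_cases j <;> simp <;> linarith
    · intro w _
      set Δ : ℝ := A 0 0 * A 1 1 - A 0 1 * A 1 0 with hΔdef
      set α : ℝ := (w 0 + w 1) / 2
      set β : ℝ := (w 0 - w 1) / 2
      set γ : ℝ := w 2 / 2
      refine ⟨!![Δ * (A 0 1 * α - A 0 0 * γ), Δ * (A 0 1 * γ - A 0 0 * β);
                 Δ * (A 1 1 * α - A 1 0 * γ), Δ * (A 1 1 * γ - A 1 0 * β)], ?_, ?_⟩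
      · rw [mem_iff]
        simp [Matrix.cons_val_zero, Matrix.cons_val_one, Matrix.head_cons]
        ring
      · funext i
        fin_cases i <;> simp [vMap, Matrix.vecHead, Matrix.vecTail]
        · linear_combination (w 0) * hdsq'
        · linear_combination (w 1) * hdsq'
        · linear_combination (w 2) * hdsq'
end

section
/- Let n ≥ 2. For x ∈ ℝⁿ⁺¹ write x̂ = (x₁, …, xₙ) and q(x̂) = −x₁² + x₂² + … + xₙ²; whenever q(x̂) < 0 (so x₁ ≠ 0), define L(x) = sign(x₁)·x_{n+1}/√(−q(x̂)). Let J = diag(−1, I_{n−1}), let A ∈ Mₙ(ℝ) satisfy Aᵀ·J·A = J, let v ∈ ℝⁿ be a row vector, let δ ∈ {1, −1}, and let g be the (n+1)×(n+1) block matrix [[A, 0], [v, δ]]. Then for any x, y ∈ ℝⁿ⁺¹ with x̂ = ŷ and q(x̂) < 0, one has q(widehat{g·x}) < 0 and |L(g·x) − L(g·y)| = |L(x) − L(y)|. -/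
open Matrix

/-- The form matrix `J = diag(-1, I_{d-1})`. -/
def Jmat (d : ℕ) : Matrix (Fin d) (Fin d) ℝ :=
  Matrix.diagonal fun i => if (i : ℕ) = 0 then -1 else 1

/-- The quadratic form `q(x̂) = -x₁² + x₂² + ⋯ + x_d²`. -/
def qf {d : ℕ} (v : Fin d → ℝ) : ℝ := v ⬝ᵥ (Jmat d).mulVec v

/-- The fiber-length coordinate `L(x) = sign(x₁)·x_{n+1}/√(-q(x̂))` on the
region `q(x̂) < 0` of `ℝⁿ⁺¹` (coordinates indexed by `Fin (n+2) ⊕ Unit`,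
so the dimension `n + 2` ranges over all integers `≥ 2`). -/
noncomputable def Lfib (n : ℕ) (x : Fin (n + 2) ⊕ Unit → ℝ) : ℝ :=
  Real.sign (x (Sum.inl 0)) * x (Sum.inr ()) /
    Real.sqrt (-(qf fun i => x (Sum.inl i)))

/-!
The block `A` preserves `q`, so `g` keeps the region `q < 0` and maps a fiber `{x̂ = const}`
to a fiber, acting on the last coordinate by `t ↦ v ⬝ x̂ + δ t`. On a fiber, `L` is the linear
function `t ↦ sign(x₁) t / √(-q(x̂))` with `|sign(x₁)| = 1`, so
`|L(x) - L(y)| = |x_{n+1} - y_{n+1}| / √(-q(x̂))`, and `g` multiplies `x_{n+1} - y_{n+1}` by `δ = ±1`.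
-/

theorem qf_mulVec {d : ℕ} {A : Matrix (Fin d) (Fin d) ℝ} (hA : Aᵀ * Jmat d * A = Jmat d)
    (w : Fin d → ℝ) : qf (A *ᵥ w) = qf w := by
  calc qf (A *ᵥ w) = (w ᵥ* Aᵀ) ⬝ᵥ (Jmat d * A) *ᵥ w := by
        rw [qf, vecMul_transpose, mulVec_mulVec]
    _ = qf w := by rw [← dotProduct_mulVec, mulVec_mulVec, ← Matrix.mul_assoc, hA, qf]

theorem qf_eq_neg_sq_add_sum {d : ℕ} (w : Fin (d + 1) → ℝ) :
    qf w = -w 0 ^ 2 + ∑ i : Fin d, w i.succ ^ 2 := by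
  simp only [qf, Jmat, dotProduct, mulVec_diagonal, Fin.sum_univ_succ, Fin.val_zero,
    Fin.val_succ, if_pos, Nat.succ_ne_zero, if_false, neg_one_mul, one_mul, mul_neg, ← sq]

theorem ne_zero_of_qf_neg {d : ℕ} {w : Fin (d + 1) → ℝ} (hw : qf w < 0) : w 0 ≠ 0 := by
  intro h0
  rw [qf_eq_neg_sq_add_sum, h0] at hw
  have : 0 ≤ ∑ i : Fin d, w i.succ ^ 2 := by positivity
  linarith

theorem Real.abs_sign_of_ne_zero {r : ℝ} (hr : r ≠ 0) : |Real.sign r| = 1 := by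
  rcases Real.sign_apply_eq_of_ne_zero r hr with h | h <;> simp [h]

theorem Lfib_sub_Lfib_of_eq_on_inl {n : ℕ} {x y : Fin (n + 2) ⊕ Unit → ℝ}
    (hxy : ∀ i, x (Sum.inl i) = y (Sum.inl i)) :
    Lfib n x - Lfib n y = Real.sign (x (Sum.inl 0)) * (x (Sum.inr ()) - y (Sum.inr ())) /
      Real.sqrt (-(qf fun i => x (Sum.inl i))) := by
  have hhat : (fun i => y (Sum.inl i)) = fun i => x (Sum.inl i) := funext fun i => (hxy i).symm
  rw [Lfib, Lfib, hhat, ← hxy 0]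
  ring

theorem abs_Lfib_sub_Lfib_of_eq_on_inl {n : ℕ} {x y : Fin (n + 2) ⊕ Unit → ℝ}
    (hxy : ∀ i, x (Sum.inl i) = y (Sum.inl i)) (hx : qf (fun i => x (Sum.inl i)) < 0) :
    |Lfib n x - Lfib n y| =
      |x (Sum.inr ()) - y (Sum.inr ())| / Real.sqrt (-(qf fun i => x (Sum.inl i))) := by
  rw [Lfib_sub_Lfib_of_eq_on_inl hxy, abs_div, abs_mul,
    Real.abs_sign_of_ne_zero (ne_zero_of_qf_neg hx), one_mul, abs_of_nonneg (Real.sqrt_nonneg _)]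

/-- The fiber-length difference `|L(x) - L(y)|` between two points of a
degenerate fiber of half-pipe space is invariant under the half-pipe
structure group of block matrices `g = [[A,0],[v,±1]]` with `A ∈ O(n-1,1)`. -/
theorem stmt_18 (n : ℕ) (A : Matrix (Fin (n + 2)) (Fin (n + 2)) ℝ)
    (hA : Aᵀ * Jmat (n + 2) * A = Jmat (n + 2))
    (v : Fin (n + 2) → ℝ) (δ : ℝ) (hδ : δ = 1 ∨ δ = -1)
    (g : Matrix (Fin (n + 2) ⊕ Unit) (Fin (n + 2) ⊕ Unit) ℝ)
    (hg : g = Matrix.fromBlocks A 0 (Matrix.replicateRow Unit v) (δ • 1))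
    (x y : Fin (n + 2) ⊕ Unit → ℝ)
    (hxy : ∀ i : Fin (n + 2), x (Sum.inl i) = y (Sum.inl i))
    (hx : qf (fun i => x (Sum.inl i)) < 0) :
    qf (fun i => g.mulVec x (Sum.inl i)) < 0 ∧
    |Lfib n (g.mulVec x) - Lfib n (g.mulVec y)| = |Lfib n x - Lfib n y| := by
  have hgl : ∀ z, (fun i => (g *ᵥ z) (Sum.inl i)) = A *ᵥ fun i => z (Sum.inl i) := by
    intro z
    simp [hg, fromBlocks_mulVec, Function.comp_def]
  have hgr : ∀ z, (g *ᵥ z) (Sum.inr ()) = v ⬝ᵥ (fun i => z (Sum.inl i)) + δ * z (Sum.inr ()) := by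
    intro z
    simp [hg, fromBlocks_mulVec, replicateRow_mulVec_eq_const, smul_mulVec, Function.comp_def]
  have hq : qf (fun i => (g *ᵥ x) (Sum.inl i)) = qf (fun i => x (Sum.inl i)) := by
    rw [hgl, qf_mulVec hA]
  have hgxy : (fun i => (g *ᵥ x) (Sum.inl i)) = fun i => (g *ᵥ y) (Sum.inl i) := by
    rw [hgl, hgl, funext hxy]
  refine ⟨hq ▸ hx, ?_⟩
  rw [abs_Lfib_sub_Lfib_of_eq_on_inl (congrFun hgxy) (hq ▸ hx),
    abs_Lfib_sub_Lfib_of_eq_on_inl hxy hx, hq, hgr, hgr, funext hxy, add_sub_add_left_eq_sub,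
    ← mul_sub, abs_mul]
  rcases hδ with rfl | rfl <;> simp
end
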